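/- arXiv:1609.08016 — 2 statements merged into one kernel-verified Lean document; each statement's English description precedes it below -/
import Mathlib

section
/- Let d ≥ 2 and let ψ : Fin d × Fin d → ℂ be a unit vector, i.e. Σ_{i,j} |ψ(i,j)|² = 1. Let M be the d×d complex matrix with entries M_{ij} = ψ(i,j), and set a := (1 − Re(Σ_{i,j} conj(ψ(i,j))·ψ(j,i)))/2. If 1/2 ≤ a ≤ 1, then every eigenvalue of the Hermitian matrix M·Mᴴ is at most 1/2 + √(a(1−a)). -/
/-!
Let `W` be the swap and `z± = z ± W z`. Since `W` is an isometry,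
`4 ⟪φ, ψ⟫ = ⟪φ₊, ψ₊⟫ + ⟪φ₋, ψ₋⟫`, while `‖ψ₊‖² = 4 (1 - a)` and `‖ψ₋‖² = 4 a` for the unit
vector `ψ`. If `u` is a unit eigenvector of `M Mᴴ` with eigenvalue `λ`, the product vector
`φ = u ⊗ conj (Mᴴ u)` satisfies `‖φ‖² = ⟪φ, ψ⟫ = λ` and `⟪φ, W φ⟫ = |⟪u, conj (Mᴴ u)⟫|² ≥ 0`,
so `‖φ₋‖ ≤ ‖φ₊‖`, whereas `a ≥ 1/2` means `‖ψ₊‖ ≤ ‖ψ₋‖`. Pairing the larger parts with each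
other (rearrangement) bounds `λ² = |⟪φ, ψ⟫|²` by `λ (1/2 + √(a (1 - a)))`.
-/

open RCLike

open scoped InnerProductSpace

theorem sq_mul_add_mul_le {s₁ s₂ t₁ t₂ : ℝ} (hs₂ : 0 ≤ s₂) (hs : s₂ ≤ s₁) (ht₁ : 0 ≤ t₁)
    (ht : t₁ ≤ t₂) :
    (s₁ * t₁ + s₂ * t₂) ^ 2 ≤ (s₁ ^ 2 + s₂ ^ 2) * ((t₁ ^ 2 + t₂ ^ 2) / 2 + t₁ * t₂) := by
  have hswap : (s₁ * t₁ + s₂ * t₂) ^ 2 ≤ (s₁ * t₂ + s₂ * t₁) ^ 2 := by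
    have hsum : 0 ≤ s₁ * t₂ + s₂ * t₁ + (s₁ * t₁ + s₂ * t₂) := by
      have := hs₂.trans hs; have := ht₁.trans ht; positivity
    nlinarith [mul_nonneg (mul_nonneg (sub_nonneg.2 hs) (sub_nonneg.2 ht)) hsum]
  nlinarith [sq_nonneg (s₁ - s₂), mul_nonneg ht₁ (ht₁.trans ht)]

section LinearIsometry

variable {𝕜 E : Type*} [RCLike 𝕜] [NormedAddCommGroup E] [InnerProductSpace 𝕜 E]
  (T : E →ₗᵢ[𝕜] E)

theorem LinearIsometry.norm_add_apply_sq (x : E) :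
    ‖x + T x‖ ^ 2 = 2 * ‖x‖ ^ 2 + 2 * re ⟪x, T x⟫_𝕜 := by
  rw [norm_add_sq (𝕜 := 𝕜), T.norm_map]; ring

theorem LinearIsometry.norm_sub_apply_sq (x : E) :
    ‖x - T x‖ ^ 2 = 2 * ‖x‖ ^ 2 - 2 * re ⟪x, T x⟫_𝕜 := by
  rw [norm_sub_sq (𝕜 := 𝕜), T.norm_map]; ring

theorem LinearIsometry.inner_add_apply_add_inner_sub_apply (x y : E) :
    ⟪x + T x, y + T y⟫_𝕜 + ⟪x - T x, y - T y⟫_𝕜 = 4 * ⟪x, y⟫_𝕜 := by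
  simp only [inner_add_left, inner_add_right, inner_sub_left, inner_sub_right, T.inner_map_map]
  ring

theorem LinearIsometry.four_mul_norm_inner_le (x y : E) :
    4 * ‖⟪x, y⟫_𝕜‖ ≤ ‖x + T x‖ * ‖y + T y‖ + ‖x - T x‖ * ‖y - T y‖ := by
  calc 4 * ‖⟪x, y⟫_𝕜‖ = ‖⟪x + T x, y + T y⟫_𝕜 + ⟪x - T x, y - T y⟫_𝕜‖ := by
        rw [T.inner_add_apply_add_inner_sub_apply, norm_mul, RCLike.norm_ofNat]
    _ ≤ _ := (norm_add_le _ _).trans (add_le_add (norm_inner_le_norm _ _) (norm_inner_le_norm _ _))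

theorem LinearIsometry.norm_inner_sq_le {x y : E} (hx : 0 ≤ re ⟪x, T x⟫_𝕜)
    (hy : re ⟪y, T y⟫_𝕜 ≤ 0) :
    ‖⟪x, y⟫_𝕜‖ ^ 2 ≤ ‖x‖ ^ 2 * (‖y‖ ^ 2 / 2 + ‖y + T y‖ * ‖y - T y‖ / 4) := by
  have hxs : ‖x - T x‖ ≤ ‖x + T x‖ := by
    refine (pow_le_pow_iff_left₀ (norm_nonneg _) (norm_nonneg _) two_ne_zero).1 ?_
    rw [T.norm_add_apply_sq, T.norm_sub_apply_sq]; linarith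
  have hys : ‖y + T y‖ ≤ ‖y - T y‖ := by
    refine (pow_le_pow_iff_left₀ (norm_nonneg _) (norm_nonneg _) two_ne_zero).1 ?_
    rw [T.norm_add_apply_sq, T.norm_sub_apply_sq]; linarith
  have hxsum : ‖x + T x‖ ^ 2 + ‖x - T x‖ ^ 2 = 4 * ‖x‖ ^ 2 := by
    rw [T.norm_add_apply_sq, T.norm_sub_apply_sq]; ring
  have hysum : ‖y + T y‖ ^ 2 + ‖y - T y‖ ^ 2 = 4 * ‖y‖ ^ 2 := by
    rw [T.norm_add_apply_sq, T.norm_sub_apply_sq]; ring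
  have key := sq_mul_add_mul_le (norm_nonneg _) hxs (norm_nonneg _) hys
  have hle := T.four_mul_norm_inner_le x y
  rw [hxsum, hysum] at key
  nlinarith [pow_le_pow_left₀ (by positivity) hle 2]

theorem LinearIsometry.norm_inner_sq_le_of_norm_eq_one {x y : E} (hx : 0 ≤ re ⟪x, T x⟫_𝕜)
    (hy : ‖y‖ = 1) {a : ℝ} (ha : a = (1 - re ⟪y, T y⟫_𝕜) / 2) (h : 1 / 2 ≤ a) :
    ‖⟪x, y⟫_𝕜‖ ^ 2 ≤ ‖x‖ ^ 2 * (1 / 2 + √(a * (1 - a))) := by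
  have hsym : ‖y + T y‖ ^ 2 = 4 * (1 - a) := by rw [T.norm_add_apply_sq, hy, ha]; ring
  have hanti : ‖y - T y‖ ^ 2 = 4 * a := by rw [T.norm_sub_apply_sq, hy, ha]; ring
  have hprod : ‖y + T y‖ * ‖y - T y‖ / 4 = √(a * (1 - a)) := by
    rw [← Real.sqrt_sq (by positivity : 0 ≤ ‖y + T y‖ * ‖y - T y‖ / 4), div_pow, mul_pow, hsym,
      hanti]
    ring_nf
  have := T.norm_inner_sq_le hx (y := y) (by linarith)
  rwa [hprod, hy, one_pow] at this

end LinearIsometry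

open Matrix

namespace EuclideanSpace

variable {𝕜 ι κ : Type*} [RCLike 𝕜]

def tmul (u : EuclideanSpace 𝕜 ι) (v : EuclideanSpace 𝕜 κ) : EuclideanSpace 𝕜 (ι × κ) :=
  WithLp.toLp 2 fun p => u p.1 * v p.2

@[simp]
theorem tmul_apply (u : EuclideanSpace 𝕜 ι) (v : EuclideanSpace 𝕜 κ) (i : ι) (j : κ) :
    tmul u v (i, j) = u i * v j :=
  rfl

variable [Fintype ι] [Fintype κ]

variable (𝕜 ι) in
noncomputable def prodSwap : EuclideanSpace 𝕜 (ι × ι) ≃ₗᵢ[𝕜] EuclideanSpace 𝕜 (ι × ι) :=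
  LinearIsometryEquiv.piLpCongrLeft 2 𝕜 𝕜 (Equiv.prodComm ι ι)

@[simp]
theorem prodSwap_apply (x : EuclideanSpace 𝕜 (ι × ι)) (i j : ι) :
    prodSwap 𝕜 ι x (i, j) = x (j, i) :=
  rfl

theorem norm_tmul (u : EuclideanSpace 𝕜 ι) (v : EuclideanSpace 𝕜 κ) :
    ‖tmul u v‖ = ‖u‖ * ‖v‖ := by
  rw [← sq_eq_sq₀ (norm_nonneg _) (by positivity), mul_pow, EuclideanSpace.norm_sq_eq,
    EuclideanSpace.norm_sq_eq, EuclideanSpace.norm_sq_eq, Fintype.sum_prod_type,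
    Finset.sum_mul_sum]
  simp [mul_pow]

theorem inner_tmul_prodSwap_tmul (u v : EuclideanSpace 𝕜 ι) :
    ⟪tmul u v, prodSwap 𝕜 ι (tmul u v)⟫_𝕜 = ⟪u, v⟫_𝕜 * ⟪v, u⟫_𝕜 := by
  simp only [PiLp.inner_apply, Fintype.sum_prod_type, prodSwap_apply, tmul_apply,
    Finset.sum_mul_sum, RCLike.inner_apply, map_mul]
  refine Finset.sum_congr rfl fun i _ => Finset.sum_congr rfl fun j _ => ?_
  ring

theorem inner_tmul_toLp (u : EuclideanSpace 𝕜 ι) (v : EuclideanSpace 𝕜 κ) (M : Matrix ι κ 𝕜) :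
    ⟪tmul u v, WithLp.toLp 2 fun p => M p.1 p.2⟫_𝕜 =
      star (WithLp.ofLp u) ⬝ᵥ M *ᵥ star (WithLp.ofLp v) := by
  simp only [PiLp.inner_apply, Fintype.sum_prod_type, tmul_apply, RCLike.inner_apply, map_mul,
    dotProduct, Matrix.mulVec, Finset.mul_sum]
  refine Finset.sum_congr rfl fun i _ => Finset.sum_congr rfl fun j _ => ?_
  simp only [Pi.star_apply, RCLike.star_def]
  ring

end EuclideanSpace

namespace Matrix

variable {𝕜 ι κ : Type*} [RCLike 𝕜] [Fintype ι] [Fintype κ]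

theorem star_mulVec_conjTranspose_dotProduct (M : Matrix ι κ 𝕜) (u : ι → 𝕜) :
    star (Mᴴ *ᵥ u) ⬝ᵥ Mᴴ *ᵥ u = star u ⬝ᵥ (M * Mᴴ) *ᵥ u := by
  rw [star_mulVec, conjTranspose_conjTranspose, ← dotProduct_mulVec, mulVec_mulVec]

variable [DecidableEq ι]

theorem IsHermitian.star_dotProduct_mulVec_eigenvectorBasis {A : Matrix ι ι 𝕜}
    (hA : A.IsHermitian) (i : ι) :
    star ⇑(hA.eigenvectorBasis i) ⬝ᵥ A *ᵥ ⇑(hA.eigenvectorBasis i) = hA.eigenvalues i := by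
  rw [hA.mulVec_eigenvectorBasis, dotProduct_comm, smul_dotProduct,
    ← EuclideanSpace.inner_eq_star_dotProduct, inner_self_eq_norm_sq_to_K,
    hA.eigenvectorBasis.orthonormal.1 i, RCLike.real_smul_eq_coe_mul]
  simp

theorem exists_inner_eq_eigenvalues_mul_conjTranspose_self (M : Matrix ι ι 𝕜) (i : ι) :
    ∃ x : EuclideanSpace 𝕜 (ι × ι), 0 ≤ re ⟪x, EuclideanSpace.prodSwap 𝕜 ι x⟫_𝕜 ∧
      ‖x‖ ^ 2 = (isHermitian_mul_conjTranspose_self M).eigenvalues i ∧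
      ⟪x, WithLp.toLp 2 fun p => M p.1 p.2⟫_𝕜 =
        (isHermitian_mul_conjTranspose_self M).eigenvalues i := by
  set H := isHermitian_mul_conjTranspose_self M
  set u := H.eigenvectorBasis i
  have hq := H.star_dotProduct_mulVec_eigenvectorBasis i
  refine ⟨EuclideanSpace.tmul u (WithLp.toLp 2 (star (Mᴴ *ᵥ u))), ?_, ?_, ?_⟩
  · rw [EuclideanSpace.inner_tmul_prodSwap_tmul, inner_mul_symm_re_eq_norm]
    exact norm_nonneg _
  · rw [EuclideanSpace.norm_tmul, H.eigenvectorBasis.orthonormal.1 i, one_mul,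
      @norm_sq_eq_re_inner 𝕜, EuclideanSpace.inner_toLp_toLp, star_star,
      star_mulVec_conjTranspose_dotProduct, hq, RCLike.ofReal_re]
  · rw [EuclideanSpace.inner_tmul_toLp, star_star, mulVec_mulVec, hq]

end Matrix

theorem eigenvalues_le_of_antisymmetric_overlap_general (d : ℕ)
    (ψ : Fin d × Fin d → ℂ)
    (hψ : ∑ p : Fin d × Fin d, ‖ψ p‖ ^ 2 = 1)
    (M : Matrix (Fin d) (Fin d) ℂ) (hM : ∀ i j, M i j = ψ (i, j))
    (a : ℝ)
    (ha : a = (1 - (∑ i, ∑ j, (starRingEnd ℂ) (ψ (i, j)) * ψ (j, i)).re) / 2)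
    (h1 : 1 / 2 ≤ a) :
    ∀ i, (Matrix.isHermitian_mul_conjTranspose_self M).eigenvalues i ≤
      1 / 2 + Real.sqrt (a * (1 - a)) := by
  intro i
  obtain ⟨x, hxW, hx, hxψ⟩ := M.exists_inner_eq_eigenvalues_mul_conjTranspose_self i
  have hMψ : (fun p : Fin d × Fin d => M p.1 p.2) = ψ := funext fun p => hM p.1 p.2
  rw [hMψ] at hxψ
  set W := EuclideanSpace.prodSwap ℂ (Fin d)
  have hψ1 : ‖WithLp.toLp 2 ψ‖ = 1 := by
    rw [EuclideanSpace.norm_eq]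
    simp [hψ]
  have ha' : a = (1 - re ⟪WithLp.toLp 2 ψ, W (WithLp.toLp 2 ψ)⟫_ℂ) / 2 := by
    simp only [ha, PiLp.inner_apply, Fintype.sum_prod_type, W, EuclideanSpace.prodSwap_apply,
      RCLike.inner_apply', RCLike.re_to_complex]
  have key := W.toLinearIsometry.norm_inner_sq_le_of_norm_eq_one hxW hψ1 ha' h1
  rw [hxψ, hx, RCLike.norm_ofReal, sq_abs] at key
  nlinarith [Real.sqrt_nonneg (a * (1 - a))]

/-- For a bipartite unit vector `ψ : Fin d × Fin d → ℂ` with matrix of coefficients `M`,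
if `a = (1 − Re ∑ᵢⱼ conj(ψ(i,j)) ψ(j,i))/2 ∈ [1/2, 1]`, then every eigenvalue of the
Hermitian matrix `M Mᴴ` is at most `1/2 + √(a(1−a))`. -/
theorem eigenvalues_le_of_antisymmetric_overlap (d : ℕ) (hd : 2 ≤ d)
    (ψ : Fin d × Fin d → ℂ)
    (hψ : ∑ p : Fin d × Fin d, ‖ψ p‖ ^ 2 = 1)
    (M : Matrix (Fin d) (Fin d) ℂ) (hM : ∀ i j, M i j = ψ (i, j))
    (a : ℝ)
    (ha : a = (1 - (∑ i, ∑ j, (starRingEnd ℂ) (ψ (i, j)) * ψ (j, i)).re) / 2)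
    (h1 : 1 / 2 ≤ a) (h2 : a ≤ 1) :
    ∀ i, (Matrix.isHermitian_mul_conjTranspose_self M).eigenvalues i ≤
      1 / 2 + Real.sqrt (a * (1 - a)) :=
  eigenvalues_le_of_antisymmetric_overlap_general d ψ hψ M hM a ha h1
end

section
/- Let d ≥ 2, let β ∈ [1 − 1/d, 1], and let λ : Fin d → ℝ be a probability vector (λᵢ ≥ 0, Σᵢ λᵢ = 1) satisfying Σᵢ √λᵢ = √(d·β). Set t := (√((d−1)·β) + √(1−β))²/(d·(d−1)). Then ∏ᵢ λᵢ ≥ t^(d−1)·(1 − (d−1)·t). -/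
/-!
Write `xᵢ = √λᵢ`, so that `∑ xᵢ = √(dβ)` and `∑ xᵢ² = 1`. These are also the power sums of the
vector `(a, …, a, b)` with `a = √t` and `0 ≤ b ≤ a`, and Cauchy–Schwarz applied to the other
`d - 1` coordinates shows that every `xᵢ ≥ b`. On `[b, ∞)` the logarithm lies above a quadratic
`q` that meets it at `a` and `b`; Rolle's theorem places the second critical point of `log - q`
between `b` and `a`, which is what makes `q ≤ log` work. Since `∑ q(xᵢ)` depends only on the
two power sums, `∑ log xᵢ ≥ ∑ q(xᵢ) = (d - 1) log a + log b`, i.e. `∏ xᵢ ≥ a^(d-1) b`.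
-/

open Real Set

/-- `log` minus a quadratic, normalised so that the derivative vanishes at `a` and at `1 / s`. -/
noncomputable def logSubQuad (a s y : ℝ) : ℝ := log y - (1 / a + s) * y + s * y ^ 2 / (2 * a)

lemma hasDerivAt_logSubQuad {a s y : ℝ} (ha : a ≠ 0) (hy : y ≠ 0) :
    HasDerivAt (logSubQuad a s) ((a - y) * (1 - s * y) / (a * y)) y := by
  have h := ((hasDerivAt_log hy).sub ((hasDerivAt_id' y).const_mul (1 / a + s))).add
    (((hasDerivAt_pow 2 y).const_mul s).div_const (2 * a))
  refine h.congr_deriv ?_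
  field_simp
  ring

lemma logSubQuad_le_of_le {a b m x : ℝ} (hb : 0 < b) (hbm : b ≤ m) (hma : m ≤ a)
    (hab : logSubQuad a m⁻¹ a ≤ logSubQuad a m⁻¹ b) (hx : b ≤ x) :
    logSubQuad a m⁻¹ a ≤ logSubQuad a m⁻¹ x := by
  set g := logSubQuad a m⁻¹
  have hm : 0 < m := hb.trans_le hbm
  have ha : 0 < a := hm.trans_le hma
  have hderiv : ∀ y, 0 < y → HasDerivAt g ((a - y) * (m - y) / (a * m * y)) y := fun y hy => by
    convert hasDerivAt_logSubQuad (s := m⁻¹) ha.ne' hy.ne' using 1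
    field_simp
  have hcont : ∀ D ⊆ Ioi 0, ContinuousOn g D := fun D hD y hy =>
    (hderiv y (hD hy)).continuousAt.continuousWithinAt
  have hderivWithin : ∀ D ⊆ Ioi 0, ∀ y ∈ interior D,
      HasDerivWithinAt g ((a - y) * (m - y) / (a * m * y)) (interior D) y := fun D hD y hy =>
    (hderiv y (hD (interior_subset hy))).hasDerivWithinAt
  have mono_left : MonotoneOn g (Icc b m) :=
    monotoneOn_of_hasDerivWithinAt_nonneg (convex_Icc b m)
      (hcont _ fun y hy => hb.trans_le hy.1) (hderivWithin _ fun y hy => hb.trans_le hy.1) <| by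
        rw [interior_Icc]
        exact fun y hy => div_nonneg (mul_nonneg (by linarith [hy.2]) (by linarith [hy.2]))
          (by have := hb.trans hy.1; positivity)
  have anti_mid : AntitoneOn g (Icc m a) :=
    antitoneOn_of_hasDerivWithinAt_nonpos (convex_Icc m a)
      (hcont _ fun y hy => hm.trans_le hy.1) (hderivWithin _ fun y hy => hm.trans_le hy.1) <| by
        rw [interior_Icc]
        exact fun y hy => div_nonpos_of_nonpos_of_nonneg
          (mul_nonpos_of_nonneg_of_nonpos (by linarith [hy.2]) (by linarith [hy.1]))
          (by have := hm.trans hy.1; positivity)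
  have mono_right : MonotoneOn g (Ici a) :=
    monotoneOn_of_hasDerivWithinAt_nonneg (convex_Ici a)
      (hcont _ fun y hy => ha.trans_le hy) (hderivWithin _ fun y hy => ha.trans_le hy) <| by
        rw [interior_Ici]
        exact fun y (hy : a < y) => div_nonneg
          (mul_nonneg_of_nonpos_of_nonpos (by linarith) (by linarith))
          (by have := ha.trans hy; positivity)
  rcases le_total x m with hxm | hmx
  · exact hab.trans (mono_left ⟨le_rfl, hbm⟩ ⟨hx, hxm⟩ hx)
  rcases le_total x a with hxa | hax
  · exact anti_mid ⟨hmx, hxa⟩ ⟨hma, le_rfl⟩ hxa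
  · exact mono_right self_mem_Ici hax hax

lemma exists_logSubQuad_eq {a b : ℝ} (hb : 0 < b) (hba : b ≤ a) :
    ∃ m ∈ Icc b a, logSubQuad a m⁻¹ a = logSubQuad a m⁻¹ b := by
  rcases hba.eq_or_lt with rfl | hlt
  · exact ⟨b, left_mem_Icc.2 le_rfl, rfl⟩
  have ha : 0 < a := hb.trans hlt
  -- `logSubQuad a s a - logSubQuad a s b` is affine in `s`; this is its root.
  set s := 2 * a * (log a - log b - (a - b) / a) / (a - b) ^ 2
  have heq : logSubQuad a s b = logSubQuad a s a := by
    simp only [logSubQuad, s]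
    field_simp
    ring
  have hderiv : ∀ y ∈ Icc b a, HasDerivAt (logSubQuad a s) ((a - y) * (1 - s * y) / (a * y)) y :=
    fun y hy => hasDerivAt_logSubQuad ha.ne' (hb.trans_le hy.1).ne'
  obtain ⟨m, hm, hm0⟩ := exists_hasDerivAt_eq_zero hlt
    (fun y hy => (hderiv y hy).continuousAt.continuousWithinAt) heq
    (fun y hy => hderiv y (Ioo_subset_Icc_self hy))
  have hms : s = m⁻¹ := by
    have hm0' : 0 < m := hb.trans hm.1
    rw [div_eq_zero_iff, mul_eq_zero, sub_eq_zero, sub_eq_zero] at hm0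
    rcases hm0 with (h | h) | h
    · exact absurd h (ne_of_gt hm.2)
    · field_simp; linarith
    · exact absurd h (by positivity)
  exact ⟨m, Ioo_subset_Icc_self hm, hms ▸ heq.symm⟩

theorem exists_quadratic_le_log {a b : ℝ} (hb : 0 < b) (hba : b ≤ a) :
    ∃ c₀ c₁ c₂ : ℝ, c₀ + c₁ * a + c₂ * a ^ 2 = log a ∧ c₀ + c₁ * b + c₂ * b ^ 2 = log b ∧
      ∀ x, b ≤ x → c₀ + c₁ * x + c₂ * x ^ 2 ≤ log x := by
  obtain ⟨m, ⟨hbm, hma⟩, hgab⟩ := exists_logSubQuad_eq hb hba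
  set g := logSubQuad a m⁻¹
  have hquad : ∀ x, g a + (1 / a + m⁻¹) * x + (-m⁻¹ / (2 * a)) * x ^ 2 = g a + (log x - g x) := by
    intro x
    simp only [g, logSubQuad]
    ring
  refine ⟨g a, 1 / a + m⁻¹, -m⁻¹ / (2 * a), ?_, ?_, fun x hx => ?_⟩
  · rw [hquad]; ring
  · rw [hquad, hgab]; ring
  · rw [hquad]
    linarith [logSubQuad_le_of_le hb hbm hma hgab.le hx]

section Moments

variable {ι : Type*} [Fintype ι] {x : ι → ℝ} {a b : ℝ}

theorem le_of_sum_eq_of_sum_sq_eq (hba : b ≤ a)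
    (h₁ : ∑ i, x i = (Fintype.card ι - 1 : ℝ) * a + b)
    (h₂ : ∑ i, x i ^ 2 = (Fintype.card ι - 1 : ℝ) * a ^ 2 + b ^ 2) (i : ι) : b ≤ x i := by
  classical
  set n : ℝ := Fintype.card ι - 1
  have hn : 0 ≤ n := by
    have : (1 : ℝ) ≤ Fintype.card ι := by exact_mod_cast Fintype.card_pos_iff.2 ⟨i⟩
    linarith
  have hcs : (∑ j ∈ Finset.univ.erase i, x j) ^ 2 ≤ n * ∑ j ∈ Finset.univ.erase i, x j ^ 2 := by
    have := sq_sum_le_card_mul_sum_sq (s := Finset.univ.erase i) (f := x)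
    rwa [Finset.card_erase_of_mem (Finset.mem_univ i), Finset.card_univ,
      Nat.cast_pred (Fintype.card_pos_iff.2 ⟨i⟩)] at this
  rw [Finset.sum_erase_eq_sub (Finset.mem_univ i), Finset.sum_erase_eq_sub (Finset.mem_univ i),
    h₁, h₂] at hcs
  -- The quadratic in `x i` has the roots `b ≤ (2na - (n-1)b)/(n+1)`.
  have hfactor : (x i - b) * ((n + 1) * x i - 2 * n * a + (n - 1) * b) ≤ 0 := by nlinarith
  by_contra! hlt
  have hroot : (n + 1) * x i - 2 * n * a + (n - 1) * b < 0 := by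
    nlinarith [mul_nonneg hn (sub_nonneg.2 hba)]
  linarith [mul_pos_of_neg_of_neg (sub_neg.2 hlt) hroot]

theorem pow_mul_le_prod_of_sum_eq_of_sum_sq_eq [Nonempty ι] (hb : 0 < b) (hba : b ≤ a)
    (h₁ : ∑ i, x i = (Fintype.card ι - 1 : ℝ) * a + b)
    (h₂ : ∑ i, x i ^ 2 = (Fintype.card ι - 1 : ℝ) * a ^ 2 + b ^ 2) :
    a ^ (Fintype.card ι - 1) * b ≤ ∏ i, x i := by
  obtain ⟨c₀, c₁, c₂, hqa, hqb, hq⟩ := exists_quadratic_le_log hb hba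
  have hx i : b ≤ x i := le_of_sum_eq_of_sum_sq_eq hba h₁ h₂ i
  have hx_pos i : 0 < x i := hb.trans_le (hx i)
  have hlog : (Fintype.card ι - 1 : ℝ) * log a + log b ≤ ∑ i, log (x i) :=
    calc (Fintype.card ι - 1 : ℝ) * log a + log b
        = ∑ i, (c₀ + c₁ * x i + c₂ * x i ^ 2) := by
          rw [Finset.sum_add_distrib, Finset.sum_add_distrib, ← Finset.mul_sum, ← Finset.mul_sum,
            h₁, h₂, Finset.sum_const, Finset.card_univ, nsmul_eq_mul, ← hqa, ← hqb]
          ring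
      _ ≤ ∑ i, log (x i) := Finset.sum_le_sum fun i _ => hq _ (hx i)
  have ha : 0 < a := hb.trans_le hba
  rw [← log_le_log_iff (by positivity) (Finset.prod_pos fun i _ => hx_pos i),
    log_prod fun i _ => (hx_pos i).ne', log_mul (by positivity) hb.ne', log_pow,
    Nat.cast_pred Fintype.card_pos]
  exact hlog

end Moments

theorem exists_extremal_profile {d β t : ℝ} (hd : 1 < d) (hβ : β ∈ Icc (1 - 1 / d) 1)
    (ht : t = (√((d - 1) * β) + √(1 - β)) ^ 2 / (d * (d - 1))) :
    ∃ a b : ℝ, 0 ≤ b ∧ b ≤ a ∧ (d - 1) * a + b = √(d * β) ∧ (d - 1) * a ^ 2 + b ^ 2 = 1 ∧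
      t = a ^ 2 := by
  obtain ⟨hβ₁, hβ₂⟩ := hβ
  have hdβ : d - 1 ≤ d * β := by
    have := mul_le_mul_of_nonneg_left hβ₁ (by linarith : 0 ≤ d)
    rwa [mul_sub, mul_one, mul_one_div_cancel (by linarith)] at this
  have hβ₀ : 0 ≤ β := by nlinarith
  set u := √β
  set v := √(1 - β)
  set p := √d
  set q := √(d - 1)
  have hu : u ^ 2 = β := sq_sqrt hβ₀
  have hv : v ^ 2 = 1 - β := sq_sqrt (by linarith)
  have hp : p ^ 2 = d := sq_sqrt (by linarith)
  have hq : q ^ 2 = d - 1 := sq_sqrt (by linarith)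
  have hp₀ : 0 < p := sqrt_pos.2 (by linarith)
  have hq₀ : 0 < q := sqrt_pos.2 (by linarith)
  have hv₀ : 0 ≤ v := sqrt_nonneg _
  have hqv : q * v ≤ u := by
    rw [← sqrt_mul (by linarith)]
    exact sqrt_le_sqrt (by nlinarith)
  refine ⟨(q * u + v) / (p * q), (u - q * v) / p, div_nonneg (sub_nonneg.2 hqv) hp₀.le,
    ?_, ?_, ?_, ?_⟩
  · rw [div_le_div_iff₀ hp₀ (by positivity)]
    nlinarith [mul_nonneg hp₀.le hv₀]
  · rw [sqrt_mul (by linarith), ← hq]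
    field_simp
    linear_combination u * hq - u * hp
  · rw [← hq]
    field_simp
    linear_combination (q ^ 2 + 1) * (hu + hv) + hq - hp
  · rw [ht, sqrt_mul (by linarith), div_pow, mul_pow, hp, hq]

/-- For a probability vector `λ` on `Fin d` with `∑ᵢ √λᵢ = √(dβ)`, `β ∈ [1−1/d, 1]`,
and `t = (√((d−1)β) + √(1−β))²/(d(d−1))`, one has `∏ᵢ λᵢ ≥ t^(d−1)(1 − (d−1)t)`. -/
theorem prod_ge_of_overlap (d : ℕ) (hd : 2 ≤ d)
    (β : ℝ) (hβ : β ∈ Set.Icc (1 - 1 / (d : ℝ)) 1)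
    (lam : Fin d → ℝ) (hlam : ∀ i, 0 ≤ lam i) (hsum : ∑ i, lam i = 1)
    (hs : ∑ i, Real.sqrt (lam i) = Real.sqrt (d * β))
    (t : ℝ)
    (ht : t = (Real.sqrt (((d : ℝ) - 1) * β) + Real.sqrt (1 - β)) ^ 2 /
      ((d : ℝ) * ((d : ℝ) - 1))) :
    ∏ i, lam i ≥ t ^ (d - 1) * (1 - ((d : ℝ) - 1) * t) := by
  obtain ⟨a, b, hb, hba, h₁, h₂, rfl⟩ := exists_extremal_profile (by exact_mod_cast hd) hβ ht
  have hrhs : (a ^ 2) ^ (d - 1) * (1 - ((d : ℝ) - 1) * a ^ 2) = (a ^ (d - 1) * b) ^ 2 := by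
    rw [show 1 - ((d : ℝ) - 1) * a ^ 2 = b ^ 2 by linarith]
    ring
  have hprod : ∏ i, lam i = (∏ i, √(lam i)) ^ 2 := by
    rw [← Finset.prod_pow]
    exact Finset.prod_congr rfl fun i _ => (sq_sqrt (hlam i)).symm
  rw [ge_iff_le, hrhs, hprod]
  rcases hb.eq_or_lt with rfl | hb
  · rw [mul_zero, zero_pow two_ne_zero]
    positivity
  have : Nonempty (Fin d) := ⟨⟨0, by omega⟩⟩
  have hmoments := pow_mul_le_prod_of_sum_eq_of_sum_sq_eq (x := fun i => √(lam i)) hb hba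
    (by rw [Fintype.card_fin, hs, h₁]) (by simp only [sq_sqrt (hlam _), hsum, Fintype.card_fin, h₂])
  rw [Fintype.card_fin] at hmoments
  exact pow_le_pow_left₀ (mul_nonneg (pow_nonneg (hb.le.trans hba) _) hb.le) hmoments 2
end
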